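/- arXiv:1908.05651 — 2 statements merged into one kernel-verified Lean document; each statement's English description precedes it below -/
import Mathlib

section
/- For vectors $\eta, \zeta \in \mathbb{R}^3 \setminus \{0\}$ and $\xi = \eta + \zeta$, the cross-product null form symbol satisfies the elliptic bound $\left|\frac{\eta \times \zeta}{|\eta||\zeta|}\right| \lesssim \frac{|\xi|^{1/2} (|\eta| + |\zeta| - |\xi|)^{1/2}}{|\eta|^{1/2} |\zeta|^{1/2}}$, with an absolute implicit constant. -/
/-
With `e = ‖η‖`, `z = ‖ζ‖`, `x = ‖η + ζ‖`, Lagrange's identity and the polarization identity turn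
`4 ‖η × ζ‖²` into Heron's product `((e + z)² - x²) (x² - (e - z)²)` for the triangle with sides
`e, z, x`. Splitting off the factor `e + z - x`, the other three factors are at most `4 max e z`,
`2 min e z` and `2 x`, so `‖η × ζ‖² ≤ 4 e z x (e + z - x)`: the bound holds with `C = 2`.
-/

noncomputable section

abbrev E3 := EuclideanSpace ℝ (Fin 3)

/-- The cross product in `ℝ³` (with the Euclidean norm). -/
def cross3 (a b : E3) : E3 :=
  (WithLp.equiv 2 (Fin 3 → ℝ)).symm
    ![a 1 * b 2 - a 2 * b 1, a 2 * b 0 - a 0 * b 2, a 0 * b 1 - a 1 * b 0]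

open Matrix

theorem cross3_eq_crossProduct (a b : E3) :
    cross3 a b = WithLp.toLp 2 (a.ofLp ⨯₃ b.ofLp) := rfl

theorem EuclideanSpace.real_inner_eq_dotProduct {ι : Type*} [Fintype ι]
    (a b : EuclideanSpace ℝ ι) :
    inner ℝ a b = a.ofLp ⬝ᵥ b.ofLp := by
  rw [EuclideanSpace.inner_eq_star_dotProduct, star_trivial, dotProduct_comm]

theorem norm_cross3_sq (a b : E3) :
    ‖cross3 a b‖ ^ 2 = ‖a‖ ^ 2 * ‖b‖ ^ 2 - inner ℝ a b ^ 2 := by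
  simp only [← real_inner_self_eq_norm_sq, EuclideanSpace.real_inner_eq_dotProduct,
    cross3_eq_crossProduct, cross_dot_cross, dotProduct_comm b.ofLp a.ofLp]
  ring

theorem heron_product_le {e z x : ℝ} (hlow : |e - z| ≤ x) (hup : x ≤ e + z) :
    ((e + z) ^ 2 - x ^ 2) * (x ^ 2 - (e - z) ^ 2) ≤ 16 * (e * z * x * (e + z - x)) := by
  obtain ⟨h1, h2⟩ := abs_le.1 hlow
  have hBC : 0 ≤ (x + e - z) * (x - e + z) := mul_nonneg (by linarith) (by linarith)
  have key : (e + z + x) * ((x + e - z) * (x - e + z)) ≤ 16 * (e * z * x) := by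
    rcases le_total z e with h | h
    · calc (e + z + x) * ((x + e - z) * (x - e + z)) ≤ (4 * e) * ((2 * x) * (2 * z)) := by
            gcongr <;> linarith
      _ = 16 * (e * z * x) := by ring
    · calc (e + z + x) * ((x + e - z) * (x - e + z)) ≤ (4 * z) * ((2 * e) * (2 * x)) := by
            gcongr <;> linarith
      _ = 16 * (e * z * x) := by ring
  calc ((e + z) ^ 2 - x ^ 2) * (x ^ 2 - (e - z) ^ 2)
      = (e + z + x) * ((x + e - z) * (x - e + z)) * (e + z - x) := by ring
    _ ≤ 16 * (e * z * x) * (e + z - x) := by gcongr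
    _ = _ := by ring

section InnerProductSpace

variable {F : Type*} [NormedAddCommGroup F] [InnerProductSpace ℝ F]

theorem four_mul_sq_norm_mul_sub_inner_sq (a b : F) :
    4 * (‖a‖ ^ 2 * ‖b‖ ^ 2 - inner ℝ a b ^ 2) =
      ((‖a‖ + ‖b‖) ^ 2 - ‖a + b‖ ^ 2) * (‖a + b‖ ^ 2 - (‖a‖ - ‖b‖) ^ 2) := by
  rw [norm_add_sq_real]
  ring

theorem sq_norm_mul_sub_inner_sq_le (a b : F) :
    ‖a‖ ^ 2 * ‖b‖ ^ 2 - inner ℝ a b ^ 2 ≤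
      4 * (‖a‖ * ‖b‖ * ‖a + b‖ * (‖a‖ + ‖b‖ - ‖a + b‖)) := by
  have hlow : |‖a‖ - ‖b‖| ≤ ‖a + b‖ := by
    simpa using abs_norm_sub_norm_le a (-b)
  have := heron_product_le hlow (norm_add_le a b)
  rw [← four_mul_sq_norm_mul_sub_inner_sq] at this
  linarith

end InnerProductSpace

theorem norm_cross3_le (a b : E3) :
    ‖cross3 a b‖ ≤ 2 * √(‖a‖ * ‖b‖) * √(‖a + b‖ * (‖a‖ + ‖b‖ - ‖a + b‖)) := by
  have hw : 0 ≤ ‖a‖ + ‖b‖ - ‖a + b‖ := sub_nonneg.2 (norm_add_le a b)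
  calc ‖cross3 a b‖ ≤ √(2 ^ 2 * (‖a‖ * ‖b‖) * (‖a + b‖ * (‖a‖ + ‖b‖ - ‖a + b‖))) := by
        rw [Real.le_sqrt (norm_nonneg _) (by positivity), norm_cross3_sq]
        linarith [sq_norm_mul_sub_inner_sq_le a b]
    _ = _ := by
        rw [Real.sqrt_mul (by positivity), Real.sqrt_mul (by positivity), Real.sqrt_sq zero_le_two]

theorem norm_cross3_div_le (a b : E3) :
    ‖cross3 a b‖ / (‖a‖ * ‖b‖) ≤
      2 * (√‖a + b‖ * √(‖a‖ + ‖b‖ - ‖a + b‖)) / (√‖a‖ * √‖b‖) := by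
  calc ‖cross3 a b‖ / (‖a‖ * ‖b‖)
      ≤ 2 * √(‖a‖ * ‖b‖) * √(‖a + b‖ * (‖a‖ + ‖b‖ - ‖a + b‖)) / (‖a‖ * ‖b‖) := by
        gcongr
        exact norm_cross3_le a b
    _ = 2 * √(‖a + b‖ * (‖a‖ + ‖b‖ - ‖a + b‖)) * (√(‖a‖ * ‖b‖) / (‖a‖ * ‖b‖)) := by ring
    _ = _ := by
        rw [Real.sqrt_div_self', Real.sqrt_mul (norm_nonneg _), Real.sqrt_mul (norm_nonneg _)]
        ring

/-- Elliptic bound for the cross-product null form symbol: with `ξ = η + ζ`,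
`|η × ζ| / (|η||ζ|) ≲ |ξ|^{1/2} (|η|+|ζ|-|ξ|)^{1/2} / (|η|^{1/2} |ζ|^{1/2})`
with an absolute constant. -/
theorem crossproduct_nullform_elliptic_bound :
    ∃ C : ℝ, 0 < C ∧ ∀ η ζ : E3, η ≠ 0 → ζ ≠ 0 →
      ‖cross3 η ζ‖ / (‖η‖ * ‖ζ‖) ≤
        C * (Real.sqrt ‖η + ζ‖ * Real.sqrt (‖η‖ + ‖ζ‖ - ‖η + ζ‖)) /
          (Real.sqrt ‖η‖ * Real.sqrt ‖ζ‖) :=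
  ⟨2, two_pos, fun η ζ _ _ => norm_cross3_div_le η ζ⟩
end
end

section
/- (Hyperbolic Leibniz rule) For all $\tau, \rho \in \mathbb{R}$ and $\xi, \eta \in \mathbb{R}^n$, one has $\big| |\tau| - |\xi| \big| \le \big| |\rho| - |\eta| \big| + \big| |\tau - \rho| - |\xi - \eta| \big| + b_\pm(\xi,\eta)$, where the inequality holds with $b_+$ when $\rho \ge 0$ and $\tau - \rho \ge 0$, and with $b_-$ when $\rho \ge 0$ and $\tau - \rho \le 0$ (and symmetrically for the opposite signs). -/
noncomputable section

private lemma hlr_aux (a b c τ ρ : ℝ) (ha : 0 ≤ a)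
    (h1 : a ≤ b + c) (h2 : b ≤ a + c) (h3 : c ≤ a + b) :
    ((0 ≤ ρ ∧ 0 ≤ τ - ρ) →
      |(|τ| - a)| ≤ |(|ρ| - b)| + |(|τ - ρ| - c)| + (b + c - a)) ∧
    ((0 ≤ ρ ∧ τ - ρ ≤ 0) →
      |(|τ| - a)| ≤ |(|ρ| - b)| + |(|τ - ρ| - c)| + (a - |b - c|)) := by
  constructor
  · rintro ⟨hρ, hτρ⟩
    rw [abs_of_nonneg hρ, abs_of_nonneg hτρ, abs_of_nonneg (by linarith : (0:ℝ) ≤ τ)]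
    rcases abs_cases (τ - a) with ⟨e1, _⟩ | ⟨e1, _⟩ <;>
      rcases abs_cases (ρ - b) with ⟨e2, _⟩ | ⟨e2, _⟩ <;>
      rcases abs_cases (τ - ρ - c) with ⟨e3, _⟩ | ⟨e3, _⟩ <;> linarith
  · rintro ⟨hρ, hτρ⟩
    rw [abs_of_nonneg hρ, abs_of_nonpos hτρ]
    rcases abs_cases τ with ⟨e0, _⟩ | ⟨e0, _⟩ <;>
      rcases abs_cases (|τ| - a) with ⟨e1, _⟩ | ⟨e1, _⟩ <;>
      rcases abs_cases (ρ - b) with ⟨e2, _⟩ | ⟨e2, _⟩ <;>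
      rcases abs_cases (-(τ - ρ) - c) with ⟨e3, _⟩ | ⟨e3, _⟩ <;>
      rcases abs_cases (b - c) with ⟨e4, _⟩ | ⟨e4, _⟩ <;> linarith

/-- The "hyperbolic Leibniz rule": for `τ, ρ ∈ ℝ` and `ξ, η ∈ ℝⁿ`,
`||τ| - |ξ|| ≤ ||ρ| - |η|| + ||τ-ρ| - |ξ-η|| + b_±(ξ,η)`, where
`b₊(ξ,η) = |η| + |ξ-η| - |ξ|`, `b₋(ξ,η) = |ξ| - ||η| - |ξ-η||`;
the `+` sign applies when `ρ` and `τ - ρ` have the same sign, the `-` sign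
when they have opposite signs. -/
theorem hyperbolic_leibniz_rule (n : ℕ) (τ ρ : ℝ) (ξ η : EuclideanSpace ℝ (Fin n)) :
    ((0 ≤ ρ ∧ 0 ≤ τ - ρ) →
      |(|τ| - ‖ξ‖)| ≤ |(|ρ| - ‖η‖)| + |(|τ - ρ| - ‖ξ - η‖)| + (‖η‖ + ‖ξ - η‖ - ‖ξ‖)) ∧
    ((0 ≤ ρ ∧ τ - ρ ≤ 0) →
      |(|τ| - ‖ξ‖)| ≤ |(|ρ| - ‖η‖)| + |(|τ - ρ| - ‖ξ - η‖)| + (‖ξ‖ - |‖η‖ - ‖ξ - η‖|)) ∧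
    ((ρ ≤ 0 ∧ τ - ρ ≤ 0) →
      |(|τ| - ‖ξ‖)| ≤ |(|ρ| - ‖η‖)| + |(|τ - ρ| - ‖ξ - η‖)| + (‖η‖ + ‖ξ - η‖ - ‖ξ‖)) ∧
    ((ρ ≤ 0 ∧ 0 ≤ τ - ρ) →
      |(|τ| - ‖ξ‖)| ≤ |(|ρ| - ‖η‖)| + |(|τ - ρ| - ‖ξ - η‖)| + (‖ξ‖ - |‖η‖ - ‖ξ - η‖|)) := by
  have h1 : ‖ξ‖ ≤ ‖η‖ + ‖ξ - η‖ := by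
    have := norm_add_le η (ξ - η); simpa using this
  have h2 : ‖η‖ ≤ ‖ξ‖ + ‖ξ - η‖ := by
    have := norm_sub_le ξ (ξ - η); simpa using this
  have h3 : ‖ξ - η‖ ≤ ‖ξ‖ + ‖η‖ := norm_sub_le ξ η
  have A := hlr_aux ‖ξ‖ ‖η‖ ‖ξ - η‖ τ ρ (norm_nonneg ξ) h1 h2 h3
  have B := hlr_aux ‖ξ‖ ‖η‖ ‖ξ - η‖ (-τ) (-ρ) (norm_nonneg ξ) h1 h2 h3
  have hn : ∀ x : ℝ, |(-x)| = |x| := fun x => abs_neg x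
  refine ⟨A.1, A.2, ?_, ?_⟩
  · intro ⟨ha, hb⟩
    have := B.1 ⟨by linarith, by linarith⟩
    rw [hn τ, hn ρ, show -τ - -ρ = -(τ - ρ) by ring, hn (τ - ρ)] at this
    exact this
  · intro ⟨ha, hb⟩
    have := B.2 ⟨by linarith, by linarith⟩
    rw [hn τ, hn ρ, show -τ - -ρ = -(τ - ρ) by ring, hn (τ - ρ)] at this
    exact this
end
end
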